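/- arXiv:1007.1193 — 2 statements merged into one kernel-verified Lean document; each statement's English description precedes it below -/
import Mathlib

section
/- Let Σ : (0,1] → ℝ^{d×d} take positive definite values and 1_{p×p} denote the p×p matrix of ones, and let ψ̃_i be block-diagonal matrices with absolutely summable components such that Λ1 = ∫₀¹ Σ_{i=0}^∞ {ψ̃_i (1_{p×p} ⊗ Σ(r)) ψ̃_i'} ⊗ Σ(r)^{−1} dr, Λ2 = ∫₀¹ Σ_{i=0}^∞ {ψ̃_i (1_{p×p} ⊗ Σ(r)) ψ̃_i'} ⊗ Σ(r) dr and Λ3 = ∫₀¹ Σ_{i=0}^∞ {ψ̃_i (1_{p×p} ⊗ Σ(r)) ψ̃_i'} dr ⊗ I_d are well defined and Λ1, Λ2 are positive definite. Writing Σ_{i=0}^∞ ψ̃_i (1_{p×p} ⊗ Σ(r)) ψ̃_i' = Z(r)Z(r)' (Cholesky) and B_k(r) = (Z(r) ⊗ Σ(r)^{k−3/2})' for k = 1,2, one has Λ_k = ∫₀¹ B_k(r)' B_k(r) dr and Λ3 = ∫₀¹ B_2(r)' B_1(r) dr, and the matrix Λ3^{−1} Λ2 Λ3^{−1} − Λ1^{−1}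 is positive semidefinite; equivalently, Λ1 − Λ3 Λ2^{−1} Λ3 is positive semidefinite. Hence the asymptotic variance of the GLS estimator is smaller than that of the OLS estimator. -/
open MeasureTheory ProbabilityTheory Filter Matrix Kronecker Topology

noncomputable section

/-! ### Generic probabilistic notions -/

/-- Convergence in distribution (weak convergence of the image measures). -/
def TendstoInDistribution {Ω E : Type*} [MeasurableSpace Ω] [MeasurableSpace E]
    [TopologicalSpace E] (S : ℕ → Ω → E) (μ : Measure Ω) (ν : Measure E) : Prop :=
  ∀ f : BoundedContinuousFunction E ℝ,
    Tendsto (fun T => ∫ ω, f (S T ω) ∂μ) atTop (𝓝 (∫ x, f x ∂ν))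

/-- A measure on `n → ℝ` is the centered Gaussian law with covariance matrix `S` if every
linear functional pushes it forward to a one–dimensional centered Gaussian with the
corresponding variance. -/
def IsCenteredGaussian {n : Type*} [Fintype n] (ν : Measure (n → ℝ)) (S : Matrix n n ℝ) : Prop :=
  IsProbabilityMeasure ν ∧
    ∀ a : n → ℝ, ν.map (fun x => ∑ i, a i * x i) =
      gaussianReal 0 (Real.toNNReal (a ⬝ᵥ S.mulVec a))

/-- The chi-square distribution with `n` degrees of freedom, realized as the law of the sum of
squares of `n` independent standard normal random variables. -/
def chiSquare (n : ℕ) : Measure ℝ :=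
  (Measure.pi fun _ : Fin n => gaussianReal 0 1).map fun x => ∑ i, (x i) ^ 2

/-- The law of `∑ i κ i * Z i ^ 2` for independent standard normal `Z i`. -/
def weightedChiSquare {n : Type*} [Fintype n] (κ : n → ℝ) : Measure ℝ :=
  (Measure.pi fun _ : n => gaussianReal 0 1).map fun x => ∑ i, κ i * (x i) ^ 2

/-- The strong (α-)mixing coefficient between two sub-σ-fields. -/
def mixCoef {Ω : Type*} [MeasurableSpace Ω] (μ : Measure Ω) (m₁ m₂ : MeasurableSpace Ω) : ℝ :=
  sSup {x | ∃ A B : Set Ω, MeasurableSet[m₁] A ∧ MeasurableSet[m₂] B ∧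
    x = |(μ (A ∩ B)).toReal - (μ A).toReal * (μ B).toReal|}

/-- σ-field generated by the past of a process up to time `t`. -/
def pastSigma {Ω : Type*} {d : ℕ} (ε : ℤ → Ω → Fin d → ℝ) (t : ℤ) : MeasurableSpace Ω :=
  ⨆ s : {s : ℤ // s ≤ t}, MeasurableSpace.comap (ε s.1) inferInstance

/-- σ-field generated by the future of a process from time `t` on. -/
def futureSigma {Ω : Type*} {d : ℕ} (ε : ℤ → Ω → Fin d → ℝ) (t : ℤ) : MeasurableSpace Ω :=
  ⨆ s : {s : ℤ // t ≤ s}, MeasurableSpace.comap (ε s.1) inferInstance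

/-- The process `ε` is strongly (α-)mixing: the mixing coefficients tend to zero. -/
def IsAlphaMixing {Ω : Type*} [MeasurableSpace Ω] {d : ℕ} (μ : Measure Ω)
    (ε : ℤ → Ω → Fin d → ℝ) : Prop :=
  Tendsto (fun n : ℕ => ⨆ t : ℤ, mixCoef μ (pastSigma ε t) (futureSigma ε (t + n)))
    atTop (𝓝 0)

/-- A function on `(0,1]` satisfying a Lipschitz condition piecewise on a finite number of
subintervals partitioning `(0,1]`. -/
def PiecewiseLipschitzOn01 (f : ℝ → ℝ) : Prop :=
  ∃ (n : ℕ) (a : ℕ → ℝ), 0 < n ∧ a 0 = 0 ∧ a n = 1 ∧ (∀ i < n, a i < a (i + 1)) ∧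
    ∀ i < n, ∃ L : NNReal, LipschitzOnWith L f (Set.Ioc (a i) (a (i + 1)))

/-- Frobenius norm of a real matrix. -/
def frobNorm {d : ℕ} (M : Matrix (Fin d) (Fin d) ℝ) : ℝ :=
  Real.sqrt (∑ k, ∑ l, (M k l) ^ 2)

/-! ### The heteroscedastic VAR model -/

/-- Time-varying variance function `Σ(r) = G(r)G(r)'`. -/
def Sig {d : ℕ} (G : ℝ → Matrix (Fin d) (Fin d) ℝ) (r : ℝ) : Matrix (Fin d) (Fin d) ℝ :=
  G r * (G r)ᵀ

/-- The innovation `u_t = H_t ε_t` with `H_t = G(t/T)` (triangular array). -/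
def uproc {Ω : Type*} {d : ℕ} (G : ℝ → Matrix (Fin d) (Fin d) ℝ) (ε : ℤ → Ω → Fin d → ℝ)
    (T : ℕ) (t : ℤ) (ω : Ω) : Fin d → ℝ :=
  (G ((t : ℝ) / (T : ℝ))).mulVec (ε t ω)

/-- `Σ_t = H_t H_t'` with `H_t = G(t/T)`. -/
def Sigt {d : ℕ} (G : ℝ → Matrix (Fin d) (Fin d) ℝ) (T : ℕ) (t : ℤ) :
    Matrix (Fin d) (Fin d) ℝ :=
  Sig G ((t : ℝ) / (T : ℝ))

/-- The stacked vector `X̃_t = (X_t', …, X_{t-p+1}')'`. -/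
def Xtilde {Ω : Type*} {d : ℕ} (p : ℕ) (X : ℕ → ℤ → Ω → Fin d → ℝ) (T : ℕ) (t : ℤ)
    (ω : Ω) : Fin p × Fin d → ℝ :=
  fun q => X T (t - (q.1 : ℕ)) ω q.2

/-- The parameter vector `θ₀ = (vec A₁', …, vec A_p')'`. -/
def theta0 {d p : ℕ} (A : Fin p → Matrix (Fin d) (Fin d) ℝ) : (Fin p × Fin d) × Fin d → ℝ :=
  fun q => A q.1.1 q.2 q.1.2

/-- Assumption A1 of the paper. -/
structure AssumptionA1 {Ω : Type*} [MeasurableSpace Ω] (μ : Measure Ω) {d : ℕ}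
    (G : ℝ → Matrix (Fin d) (Fin d) ℝ) (ε : ℤ → Ω → Fin d → ℝ) : Prop where
  G_invertible : ∀ r ∈ Set.Ioc (0 : ℝ) 1, IsUnit (G r).det
  G_meas : ∀ k l, Measurable fun r => G r k l
  G_bdd : ∃ M : ℝ, ∀ r ∈ Set.Ioc (0 : ℝ) 1, ∀ k l, |G r k l| ≤ M
  G_lip : ∀ k l, PiecewiseLipschitzOn01 fun r => G r k l
  G_ext : ∀ r : ℝ, r ≤ 0 → G r = 1
  Sig_posdef : ∀ r ∈ Set.Ioc (0 : ℝ) 1, (Sig G r).PosDef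
  eps_meas : ∀ t, Measurable (ε t)
  mixing : IsAlphaMixing μ ε
  mds : ∀ (t : ℤ) (k : Fin d), μ[fun ω => ε t ω k|pastSigma ε (t - 1)] =ᵐ[μ] 0
  cond_var : ∀ (t : ℤ) (k l : Fin d),
    μ[fun ω => ε t ω k * ε t ω l|pastSigma ε (t - 1)] =ᵐ[μ]
      fun _ => if k = l then 1 else 0
  moments : ∃ m : ℝ, 1 < m ∧ ∃ C : ℝ, ∀ (t : ℤ) (k : Fin d),
    ∫ ω, |ε t ω k| ^ (4 * m) ∂μ ≤ C

/-- Assumption A1' of the paper (A1(i) plus uniformly bounded-below eigenvalues and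
8th order moments). -/
structure AssumptionA1' {Ω : Type*} [MeasurableSpace Ω] (μ : Measure Ω) {d : ℕ}
    (G : ℝ → Matrix (Fin d) (Fin d) ℝ) (ε : ℤ → Ω → Fin d → ℝ) : Prop where
  G_invertible : ∀ r ∈ Set.Ioc (0 : ℝ) 1, IsUnit (G r).det
  G_meas : ∀ k l, Measurable fun r => G r k l
  G_bdd : ∃ M : ℝ, ∀ r ∈ Set.Ioc (0 : ℝ) 1, ∀ k l, |G r k l| ≤ M
  G_lip : ∀ k l, PiecewiseLipschitzOn01 fun r => G r k l
  G_ext : ∀ r : ℝ, r ≤ 0 → G r = 1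
  Sig_posdef : ∀ r ∈ Set.Ioc (0 : ℝ) 1, (Sig G r).PosDef
  eig_lb : ∃ c : ℝ, 0 < c ∧ ∀ r ∈ Set.Ioc (0 : ℝ) 1, ∀ x : Fin d → ℝ,
    c * (∑ k, x k ^ 2) ≤ x ⬝ᵥ (Sig G r).mulVec x
  eps_meas : ∀ t, Measurable (ε t)
  mixing : IsAlphaMixing μ ε
  mds : ∀ (t : ℤ) (k : Fin d), μ[fun ω => ε t ω k|pastSigma ε (t - 1)] =ᵐ[μ] 0
  cond_var : ∀ (t : ℤ) (k l : Fin d),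
    μ[fun ω => ε t ω k * ε t ω l|pastSigma ε (t - 1)] =ᵐ[μ]
      fun _ => if k = l then 1 else 0
  moments8 : ∃ C : ℝ, ∀ (t : ℤ) (k : Fin d), ∫ ω, |ε t ω k| ^ (8 : ℕ) ∂μ ≤ C

/-- The VAR(p) equations `X_t = A₁X_{t-1} + … + A_p X_{t-p} + u_t` for the triangular array. -/
def IsVAR {Ω : Type*} {d p : ℕ} (X : ℕ → ℤ → Ω → Fin d → ℝ)
    (A : Fin p → Matrix (Fin d) (Fin d) ℝ) (G : ℝ → Matrix (Fin d) (Fin d) ℝ)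
    (ε : ℤ → Ω → Fin d → ℝ) : Prop :=
  ∀ (T : ℕ) (t : ℤ) (ω : Ω) (k : Fin d),
    X T t ω k = (∑ i : Fin p, (A i).mulVec (X T (t - 1 - (i : ℕ)) ω) k) + uproc G ε T t ω k

/-- Stability: `det A(z) ≠ 0` for all `|z| ≤ 1`. -/
def IsStable {d p : ℕ} (A : Fin p → Matrix (Fin d) (Fin d) ℝ) : Prop :=
  ∀ z : ℂ, ‖z‖ ≤ 1 →
    ((1 : Matrix (Fin d) (Fin d) ℂ) -
      ∑ i : Fin p, z ^ ((i : ℕ) + 1) • (A i).map (fun x => (x : ℂ))).det ≠ 0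

/-- The MA(∞) representation `X_t = ∑_{i≥0} ψ_i u_{t-i}`. -/
def HasMARep {Ω : Type*} {d p : ℕ} (X : ℕ → ℤ → Ω → Fin d → ℝ)
    (ψ : ℕ → Matrix (Fin d) (Fin d) ℝ) (G : ℝ → Matrix (Fin d) (Fin d) ℝ)
    (ε : ℤ → Ω → Fin d → ℝ) (_hp : 0 < p) : Prop :=
  ∀ (T : ℕ) (t : ℤ) (ω : Ω) (k : Fin d),
    X T t ω k = ∑' i : ℕ, (ψ i).mulVec (uproc G ε T (t - (i : ℕ)) ω) k

/-- The recursion defining the MA coefficients `ψ` from the autoregressive matrices. -/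
def IsMACoeff {d p : ℕ} (ψ : ℕ → Matrix (Fin d) (Fin d) ℝ)
    (A : Fin p → Matrix (Fin d) (Fin d) ℝ) : Prop :=
  ψ 0 = 1 ∧ ∀ n : ℕ, ψ (n + 1) =
    ∑ i : Fin p, if (i : ℕ) ≤ n then A i * ψ (n - (i : ℕ)) else 0

/-- The block diagonal matrices `ψ̃_i = blockdiag(ψ_i, …, ψ_{i-p+1})` (with `ψ_j = 0`, `j<0`). -/
def psiT {d : ℕ} (p : ℕ) (ψ : ℕ → Matrix (Fin d) (Fin d) ℝ) (i : ℕ) :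
    Matrix (Fin p × Fin d) (Fin p × Fin d) ℝ :=
  Matrix.of fun q q' =>
    if q.1 = q'.1 ∧ (q.1 : ℕ) ≤ i then ψ (i - (q.1 : ℕ)) q.2 q'.2 else 0

/-- `∑_{i≥0} ψ̃_i (1_{p×p} ⊗ S) ψ̃_i'` computed entrywise. -/
def SSmat {d : ℕ} (p : ℕ) (ψ : ℕ → Matrix (Fin d) (Fin d) ℝ)
    (S : Matrix (Fin d) (Fin d) ℝ) : Matrix (Fin p × Fin d) (Fin p × Fin d) ℝ :=
  Matrix.of fun q q' => ∑' i : ℕ,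
    (psiT p ψ i * ((Matrix.of fun _ _ => (1 : ℝ) : Matrix (Fin p) (Fin p) ℝ) ⊗ₖ S) *
      (psiT p ψ i)ᵀ) q q'

/-- `Λ₁ = ∫₀¹ {∑ ψ̃_i (1 ⊗ Σ(r)) ψ̃_i'} ⊗ Σ(r)⁻¹ dr`. -/
def Lambda1 {d : ℕ} (p : ℕ) (ψ : ℕ → Matrix (Fin d) (Fin d) ℝ)
    (G : ℝ → Matrix (Fin d) (Fin d) ℝ) :
    Matrix ((Fin p × Fin d) × Fin d) ((Fin p × Fin d) × Fin d) ℝ :=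
  Matrix.of fun q q' =>
    ∫ r in Set.Ioc (0 : ℝ) 1, SSmat p ψ (Sig G r) q.1 q'.1 * (Sig G r)⁻¹ q.2 q'.2

/-- `Λ₂ = ∫₀¹ {∑ ψ̃_i (1 ⊗ Σ(r)) ψ̃_i'} ⊗ Σ(r) dr`. -/
def Lambda2 {d : ℕ} (p : ℕ) (ψ : ℕ → Matrix (Fin d) (Fin d) ℝ)
    (G : ℝ → Matrix (Fin d) (Fin d) ℝ) :
    Matrix ((Fin p × Fin d) × Fin d) ((Fin p × Fin d) × Fin d) ℝ :=
  Matrix.of fun q q' =>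
    ∫ r in Set.Ioc (0 : ℝ) 1, SSmat p ψ (Sig G r) q.1 q'.1 * Sig G r q.2 q'.2

/-- `Λ₃ = (∫₀¹ ∑ ψ̃_i (1 ⊗ Σ(r)) ψ̃_i' dr) ⊗ I_d`. -/
def Lambda3 {d : ℕ} (p : ℕ) (ψ : ℕ → Matrix (Fin d) (Fin d) ℝ)
    (G : ℝ → Matrix (Fin d) (Fin d) ℝ) :
    Matrix ((Fin p × Fin d) × Fin d) ((Fin p × Fin d) × Fin d) ℝ :=
  Matrix.of fun q q' =>
    (∫ r in Set.Ioc (0 : ℝ) 1, SSmat p ψ (Sig G r) q.1 q'.1) *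
      (if q.2 = q'.2 then (1 : ℝ) else 0)

/-- `Ω₁ = ∫₀¹ Σ(r) ⊗ Σ(r)⁻¹ dr`. -/
def Omega1 {d : ℕ} (G : ℝ → Matrix (Fin d) (Fin d) ℝ) :
    Matrix (Fin d × Fin d) (Fin d × Fin d) ℝ :=
  Matrix.of fun a b => ∫ r in Set.Ioc (0 : ℝ) 1, Sig G r a.1 b.1 * (Sig G r)⁻¹ a.2 b.2

/-- `Ω₂ = ∫₀¹ Σ(r) ⊗ Σ(r) dr`. -/
def Omega2 {d : ℕ} (G : ℝ → Matrix (Fin d) (Fin d) ℝ) :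
    Matrix (Fin d × Fin d) (Fin d × Fin d) ℝ :=
  Matrix.of fun a b => ∫ r in Set.Ioc (0 : ℝ) 1, Sig G r a.1 b.1 * Sig G r a.2 b.2

/-- `Ω₃ = ∫₀¹ Σ(r) dr`. -/
def Omega3 {d : ℕ} (G : ℝ → Matrix (Fin d) (Fin d) ℝ) : Matrix (Fin d) (Fin d) ℝ :=
  Matrix.of fun k l => ∫ r in Set.Ioc (0 : ℝ) 1, Sig G r k l

/-- `J = (∫₀¹ ∑ ψ̃_i (1 ⊗ Σ(r)) ψ̃_i' dr) ⊗ Ω₃⁻¹`. -/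
def Jmat {d : ℕ} (p : ℕ) (ψ : ℕ → Matrix (Fin d) (Fin d) ℝ)
    (G : ℝ → Matrix (Fin d) (Fin d) ℝ) :
    Matrix ((Fin p × Fin d) × Fin d) ((Fin p × Fin d) × Fin d) ℝ :=
  Matrix.of fun q q' =>
    (∫ r in Set.Ioc (0 : ℝ) 1, SSmat p ψ (Sig G r) q.1 q'.1) * (Omega3 G)⁻¹ q.2 q'.2

/-! ### Least squares estimators -/

/-- `Σ̂_X̃ = T⁻¹ ∑ X̃_{t-1}X̃_{t-1}' ⊗ I_d` (OLS design matrix); also `Λ̂₃`. -/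
def SigHatOLS {Ω : Type*} {d : ℕ} (p : ℕ) (X : ℕ → ℤ → Ω → Fin d → ℝ) (T : ℕ) (ω : Ω) :
    Matrix ((Fin p × Fin d) × Fin d) ((Fin p × Fin d) × Fin d) ℝ :=
  (T : ℝ)⁻¹ • ∑ t ∈ Finset.range T,
    vecMulVec (Xtilde p X T (t : ℤ) ω) (Xtilde p X T (t : ℤ) ω) ⊗ₖ
      (1 : Matrix (Fin d) (Fin d) ℝ)

/-- The OLS estimator `θ̂_OLS`. -/
def thetaOLS {Ω : Type*} {d : ℕ} (p : ℕ) (X : ℕ → ℤ → Ω → Fin d → ℝ) (T : ℕ) (ω : Ω) :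
    (Fin p × Fin d) × Fin d → ℝ :=
  (SigHatOLS p X T ω)⁻¹.mulVec fun q =>
    (T : ℝ)⁻¹ * ∑ t ∈ Finset.range T, X T ((t : ℤ) + 1) ω q.2 * Xtilde p X T (t : ℤ) ω q.1

/-- `Σ̂_X̲̃ = T⁻¹ ∑ X̃_{t-1}X̃_{t-1}' ⊗ Σ_t⁻¹` (GLS design matrix). -/
def SigHatGLS {Ω : Type*} {d : ℕ} (p : ℕ) (X : ℕ → ℤ → Ω → Fin d → ℝ)
    (G : ℝ → Matrix (Fin d) (Fin d) ℝ) (T : ℕ) (ω : Ω) :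
    Matrix ((Fin p × Fin d) × Fin d) ((Fin p × Fin d) × Fin d) ℝ :=
  (T : ℝ)⁻¹ • ∑ t ∈ Finset.range T,
    vecMulVec (Xtilde p X T (t : ℤ) ω) (Xtilde p X T (t : ℤ) ω) ⊗ₖ
      (Sigt G T ((t : ℤ) + 1))⁻¹

/-- The (infeasible) GLS estimator `θ̂_GLS`. -/
def thetaGLS {Ω : Type*} {d : ℕ} (p : ℕ) (X : ℕ → ℤ → Ω → Fin d → ℝ)
    (G : ℝ → Matrix (Fin d) (Fin d) ℝ) (T : ℕ) (ω : Ω) :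
    (Fin p × Fin d) × Fin d → ℝ :=
  (SigHatGLS p X G T ω)⁻¹.mulVec fun q =>
    (T : ℝ)⁻¹ * ∑ t ∈ Finset.range T,
      (Sigt G T ((t : ℤ) + 1))⁻¹.mulVec (X T ((t : ℤ) + 1) ω) q.2 *
        Xtilde p X T (t : ℤ) ω q.1

/-- The OLS residuals `û_t`. -/
def resOLS {Ω : Type*} {d : ℕ} (p : ℕ) (X : ℕ → ℤ → Ω → Fin d → ℝ) (T : ℕ) (t : ℤ)
    (ω : Ω) : Fin d → ℝ :=
  fun k => X T t ω k -
    ∑ q : Fin p × Fin d, Xtilde p X T (t - 1) ω q * thetaOLS p X T ω (q, k)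

/-- `Ω̂₂ = T⁻¹ ∑_{t=2}^T û_{t-1}û_{t-1}' ⊗ û_t û_t'`. -/
def Omega2hat {Ω : Type*} {d : ℕ} (p : ℕ) (X : ℕ → ℤ → Ω → Fin d → ℝ) (T : ℕ) (ω : Ω) :
    Matrix (Fin d × Fin d) (Fin d × Fin d) ℝ :=
  Matrix.of fun a b => (T : ℝ)⁻¹ * ∑ t ∈ Finset.Icc 2 T,
    resOLS p X T ((t : ℤ) - 1) ω a.1 * resOLS p X T ((t : ℤ) - 1) ω b.1 *
      (resOLS p X T (t : ℤ) ω a.2 * resOLS p X T (t : ℤ) ω b.2)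

/-- `Ω̂₃ = T⁻¹ ∑_{t=1}^T û_t û_t'`. -/
def Omega3hat {Ω : Type*} {d : ℕ} (p : ℕ) (X : ℕ → ℤ → Ω → Fin d → ℝ) (T : ℕ) (ω : Ω) :
    Matrix (Fin d) (Fin d) ℝ :=
  Matrix.of fun k l => (T : ℝ)⁻¹ * ∑ t ∈ Finset.Icc 1 T,
    resOLS p X T (t : ℤ) ω k * resOLS p X T (t : ℤ) ω l

/-- `Λ̂₂ = T⁻¹ ∑ X̃_{t-1}X̃_{t-1}' ⊗ û_t û_t'`. -/
def Lambda2hat {Ω : Type*} {d : ℕ} (p : ℕ) (X : ℕ → ℤ → Ω → Fin d → ℝ) (T : ℕ) (ω : Ω) :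
    Matrix ((Fin p × Fin d) × Fin d) ((Fin p × Fin d) × Fin d) ℝ :=
  Matrix.of fun q q' => (T : ℝ)⁻¹ * ∑ t ∈ Finset.range T,
    Xtilde p X T (t : ℤ) ω q.1 * Xtilde p X T (t : ℤ) ω q'.1 *
      (resOLS p X T ((t : ℤ) + 1) ω q.2 * resOLS p X T ((t : ℤ) + 1) ω q'.2)

/-! ### Companion matrix and the vec identities -/

/-- The companion matrix `Δ` of the VAR polynomial. -/
def companion {d p : ℕ} (A : Fin p → Matrix (Fin d) (Fin d) ℝ) :
    Matrix (Fin p × Fin d) (Fin p × Fin d) ℝ :=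
  Matrix.of fun q q' =>
    if (q.1 : ℕ) = 0 then A q'.1 q.2 q'.2
    else if (q.1 : ℕ) = (q'.1 : ℕ) + 1 then (if q.2 = q'.2 then (1 : ℝ) else 0) else 0

/-- `(Δ ⊗ I_d) ⊗ (Δ ⊗ I_d)`. -/
def kron2 {d p : ℕ} (Δ : Matrix (Fin p × Fin d) (Fin p × Fin d) ℝ) :
    Matrix (((Fin p × Fin d) × Fin d) × ((Fin p × Fin d) × Fin d))
      (((Fin p × Fin d) × Fin d) × ((Fin p × Fin d) × Fin d)) ℝ :=
  (Δ ⊗ₖ (1 : Matrix (Fin d) (Fin d) ℝ)) ⊗ₖ (Δ ⊗ₖ (1 : Matrix (Fin d) (Fin d) ℝ))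

/-- `vec` of a matrix (stacking the columns). -/
def vecM {a b : Type*} (M : Matrix a b ℝ) : b × a → ℝ := fun q => M q.2 q.1

/-- Inverse of `vecM`. -/
def unvecM {a b : Type*} (v : b × a → ℝ) : Matrix a b ℝ := Matrix.of fun i j => v (j, i)

/-- The `pd² × pd²` matrix with upper-left `d² × d²` block `M` and zeros elsewhere. -/
def blockTop {d : ℕ} (p : ℕ) (M : Matrix (Fin d × Fin d) (Fin d × Fin d) ℝ) :
    Matrix ((Fin p × Fin d) × Fin d) ((Fin p × Fin d) × Fin d) ℝ :=
  Matrix.of fun q q' =>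
    if (q.1.1 : ℕ) = 0 ∧ (q'.1.1 : ℕ) = 0 then M (q.1.2, q.2) (q'.1.2, q'.2) else 0

/-- The AR matrices recovered from a parameter vector `θ`. -/
def ARof {d p : ℕ} (θ : (Fin p × Fin d) × Fin d → ℝ) :
    Fin p → Matrix (Fin d) (Fin d) ℝ :=
  fun i => Matrix.of fun k j => θ ((i, j), k)

/-- Alternative estimator `Λ̂_{2δ}` based on the vec identity and the OLS companion matrix. -/
def Lambda2deltaHat {Ω : Type*} {d : ℕ} (p : ℕ) (X : ℕ → ℤ → Ω → Fin d → ℝ) (T : ℕ)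
    (ω : Ω) : Matrix ((Fin p × Fin d) × Fin d) ((Fin p × Fin d) × Fin d) ℝ :=
  unvecM ((1 - kron2 (companion (ARof (thetaOLS p X T ω))))⁻¹.mulVec
    (vecM (blockTop p (Omega2hat p X T ω))))

/-- Alternative estimator `Λ̂_{3δ}`. -/
def Lambda3deltaHat {Ω : Type*} {d : ℕ} (p : ℕ) (X : ℕ → ℤ → Ω → Fin d → ℝ) (T : ℕ)
    (ω : Ω) : Matrix ((Fin p × Fin d) × Fin d) ((Fin p × Fin d) × Fin d) ℝ :=
  unvecM ((1 - kron2 (companion (ARof (thetaOLS p X T ω))))⁻¹.mulVec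
    (vecM (blockTop p (Omega3hat p X T ω ⊗ₖ (1 : Matrix (Fin d) (Fin d) ℝ)))))

/-! ### Kernel smoothing and the adaptive estimator -/

/-- `K_{ti}(b)`. -/
def Kti (K : ℝ → ℝ) (T : ℕ) (b : ℝ) (t i : ℕ) : ℝ :=
  if t = i then 0 else K (((t : ℝ) - (i : ℝ)) / ((T : ℝ) * b))

/-- The kernel weights `w_{ti}(b)`. -/
def wti (K : ℝ → ℝ) (T : ℕ) (b : ℝ) (t i : ℕ) : ℝ :=
  Kti K T b t i / ∑ j ∈ Finset.Icc 1 T, Kti K T b t j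

/-- Admissible bandwidth matrices: all entries in `B_T = [c_min b_T, c_max b_T]`, symmetric. -/
def Adm {d : ℕ} (bT : ℕ → ℝ) (cmin cmax : ℝ) (T : ℕ) (b : Fin d × Fin d → ℝ) : Prop :=
  (∀ kl, b kl ∈ Set.Icc (cmin * bT T) (cmax * bT T)) ∧ ∀ k l, b (k, l) = b (l, k)

/-- Assumption A2(i) on the kernel. -/
structure A2Kernel (K : ℝ → ℝ) : Prop where
  nonneg : ∀ v, 0 ≤ K v
  bdd : ∃ M : ℝ, ∀ v, K v ≤ M
  integrable : Integrable K
  density : ∫ v, K v = 1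
  mono : MonotoneOn K (Set.Iic 0)
  anti : AntitoneOn K (Set.Ici 0)
  second_moment : Integrable fun v => v ^ 2 * K v
  deriv : ∃ (s : Finset ℝ) (K' : ℝ → ℝ), (∀ v ∉ s, HasDerivAt K (K' v) v) ∧ Integrable K'
  fourier : Integrable fun s : ℝ =>
    |s| * ‖FourierTransform.fourier (fun v => (K v : ℂ)) s‖

/-- Assumption A2(ii) on the bandwidth range. -/
structure A2Bandwidth (bT : ℕ → ℝ) (cmin cmax : ℝ) : Prop where
  pos : ∀ T, 0 < bT T
  cmin_pos : 0 < cmin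
  cmin_lt_cmax : cmin < cmax
  to_zero : Tendsto bT atTop (𝓝 0)
  rate : ∃ γ : ℝ, 0 < γ ∧ Tendsto (fun T : ℕ => (T : ℝ) * bT T ^ ((2 : ℝ) + γ)) atTop atTop

/-- The raw kernel estimator `Σ̌_t⁰ = ∑_i w_{ti} ⊙ û_i û_i'`. -/
def SigCheck0 {Ω : Type*} {d : ℕ} (p : ℕ) (X : ℕ → ℤ → Ω → Fin d → ℝ) (K : ℝ → ℝ)
    (b : Fin d × Fin d → ℝ) (T t : ℕ) (ω : Ω) : Matrix (Fin d) (Fin d) ℝ :=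
  Matrix.of fun k l => ∑ i ∈ Finset.Icc 1 T,
    wti K T (b (k, l)) t i * (resOLS p X T (i : ℤ) ω k * resOLS p X T (i : ℤ) ω l)

/-- Regularized square root `{M² + ν I}^{1/2}` (for symmetric `M`, `M² = MᵀM`). -/
def matSqrtReg {d : ℕ} (M : Matrix (Fin d) (Fin d) ℝ) (ν : ℝ) : Matrix (Fin d) (Fin d) ℝ :=
  letI := Classical.dec ((Mᵀ * M + ν • (1 : Matrix (Fin d) (Fin d) ℝ)).PosSemidef)
  if h : (Mᵀ * M + ν • (1 : Matrix (Fin d) (Fin d) ℝ)).PosSemidef then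
    (h.1.eigenvectorUnitary : Matrix (Fin d) (Fin d) ℝ) *
      diagonal (fun i => Real.sqrt (h.1.eigenvalues i)) *
      (star h.1.eigenvectorUnitary : Matrix (Fin d) (Fin d) ℝ) else 1

/-- The regularized kernel estimator `Σ̌_t = {(Σ̌_t⁰)² + ν_T I}^{1/2}`. -/
def SigCheck {Ω : Type*} {d : ℕ} (p : ℕ) (X : ℕ → ℤ → Ω → Fin d → ℝ) (K : ℝ → ℝ)
    (νT : ℕ → ℝ) (b : Fin d × Fin d → ℝ) (T t : ℕ) (ω : Ω) : Matrix (Fin d) (Fin d) ℝ :=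
  matSqrtReg (SigCheck0 p X K b T t ω) (νT T)

/-- The adaptive least squares estimator `θ̂_ALS`. -/
def thetaALS {Ω : Type*} {d : ℕ} (p : ℕ) (X : ℕ → ℤ → Ω → Fin d → ℝ) (K : ℝ → ℝ)
    (νT : ℕ → ℝ) (b : Fin d × Fin d → ℝ) (T : ℕ) (ω : Ω) :
    (Fin p × Fin d) × Fin d → ℝ :=
  ((T : ℝ)⁻¹ • ∑ t ∈ Finset.range T,
      vecMulVec (Xtilde p X T (t : ℤ) ω) (Xtilde p X T (t : ℤ) ω) ⊗ₖ
        (SigCheck p X K νT b T (t + 1) ω)⁻¹)⁻¹.mulVec fun q =>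
    (T : ℝ)⁻¹ * ∑ t ∈ Finset.range T,
      (SigCheck p X K νT b T (t + 1) ω)⁻¹.mulVec (X T ((t : ℤ) + 1) ω) q.2 *
        Xtilde p X T (t : ℤ) ω q.1

/-- `Λ̌₁ = T⁻¹ ∑ X̃_{t-1}X̃_{t-1}' ⊗ Σ̌_t⁻¹`. -/
def Lambda1check {Ω : Type*} {d : ℕ} (p : ℕ) (X : ℕ → ℤ → Ω → Fin d → ℝ) (K : ℝ → ℝ)
    (νT : ℕ → ℝ) (b : Fin d × Fin d → ℝ) (T : ℕ) (ω : Ω) :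
    Matrix ((Fin p × Fin d) × Fin d) ((Fin p × Fin d) × Fin d) ℝ :=
  (T : ℝ)⁻¹ • ∑ t ∈ Finset.range T,
    vecMulVec (Xtilde p X T (t : ℤ) ω) (Xtilde p X T (t : ℤ) ω) ⊗ₖ
      (SigCheck p X K νT b T (t + 1) ω)⁻¹

/-- `Ω̌₁ = T⁻¹ ∑ Σ̌_t ⊗ Σ̌_t⁻¹`. -/
def Omega1check {Ω : Type*} {d : ℕ} (p : ℕ) (X : ℕ → ℤ → Ω → Fin d → ℝ) (K : ℝ → ℝ)
    (νT : ℕ → ℝ) (b : Fin d × Fin d → ℝ) (T : ℕ) (ω : Ω) :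
    Matrix (Fin d × Fin d) (Fin d × Fin d) ℝ :=
  Matrix.of fun a c => (T : ℝ)⁻¹ * ∑ t ∈ Finset.Icc 1 T,
    SigCheck p X K νT b T t ω a.1 c.1 * (SigCheck p X K νT b T t ω)⁻¹ a.2 c.2

/-- Alternative estimator `Λ̌_{1δ}` based on the vec identity and the ALS companion matrix. -/
def Lambda1deltaCheck {Ω : Type*} {d : ℕ} (p : ℕ) (X : ℕ → ℤ → Ω → Fin d → ℝ) (K : ℝ → ℝ)
    (νT : ℕ → ℝ) (b : Fin d × Fin d → ℝ) (T : ℕ) (ω : Ω) :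
    Matrix ((Fin p × Fin d) × Fin d) ((Fin p × Fin d) × Fin d) ℝ :=
  unvecM ((1 - kron2 (companion (ARof (thetaALS p X K νT b T ω))))⁻¹.mulVec
    (vecM (blockTop p (Omega1check p X K νT b T ω))))

/-- `Σ̊_t = ∑_i w_{ti} ⊙ u_i u_i'` (kernel smoothing of the true errors). -/
def SigRing {Ω : Type*} {d : ℕ} (G : ℝ → Matrix (Fin d) (Fin d) ℝ)
    (ε : ℤ → Ω → Fin d → ℝ) (K : ℝ → ℝ) (b : Fin d × Fin d → ℝ) (T t : ℕ) (ω : Ω) :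
    Matrix (Fin d) (Fin d) ℝ :=
  Matrix.of fun k l => ∑ i ∈ Finset.Icc 1 T,
    wti K T (b (k, l)) t i * (uproc G ε T (i : ℤ) ω k * uproc G ε T (i : ℤ) ω l)

/-- `Σ̄_t = ∑_i w_{ti} ⊙ Σ_i` (kernel smoothing of the true variances). -/
def SigBar {d : ℕ} (G : ℝ → Matrix (Fin d) (Fin d) ℝ) (K : ℝ → ℝ)
    (b : Fin d × Fin d → ℝ) (T t : ℕ) : Matrix (Fin d) (Fin d) ℝ :=
  Matrix.of fun k l => ∑ i ∈ Finset.Icc 1 T, wti K T (b (k, l)) t i * Sigt G T (i : ℤ) k l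

/-! ### Granger causality: the selection matrix and Wald statistics -/

/-- The selection matrix `R` extracting the upper-right `d₁ × d₂` blocks `A_{i,12}`. -/
def Rsel (p d d1 d2 : ℕ) : Matrix (Fin p × Fin d1 × Fin d2) ((Fin p × Fin d) × Fin d) ℝ :=
  Matrix.of fun m q =>
    if m.1 = q.1.1 ∧ (q.2 : ℕ) = (m.2.1 : ℕ) ∧ (q.1.2 : ℕ) = d1 + (m.2.2 : ℕ)
    then 1 else 0

/-- Generic Wald statistic `T θ'R'(RVR')⁻¹Rθ`. -/
def waldStat {d p d1 d2 : ℕ} (T : ℕ) (θ : (Fin p × Fin d) × Fin d → ℝ)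
    (V : Matrix ((Fin p × Fin d) × Fin d) ((Fin p × Fin d) × Fin d) ℝ) : ℝ :=
  (T : ℝ) * (Rsel p d d1 d2).mulVec θ ⬝ᵥ
    (Rsel p d d1 d2 * V * (Rsel p d d1 d2)ᵀ)⁻¹.mulVec ((Rsel p d d1 d2).mulVec θ)

/-! ### Linear processes -/

/-- The linear process `ϑ_t = ∑_{i≥0} C_i u^k_{t-i}` (non-triangular innovations). -/
def linProc {Ω : Type*} {d a k : ℕ} (C : ℕ → Matrix (Fin a) (Fin k × Fin d) ℝ)
    (u : ℤ → Ω → Fin d → ℝ) (t : ℤ) (ω : Ω) : Fin a → ℝ :=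
  fun e => ∑' i : ℕ, ∑ q : Fin k × Fin d, C i e q * u (t - (i : ℕ)) ω q.2

/-- The linear process `ϑ_t = ∑_{i≥0} C_i u^k_{t-i}` built on the triangular innovations. -/
def linProcT {Ω : Type*} {d a k : ℕ} (C : ℕ → Matrix (Fin a) (Fin k × Fin d) ℝ)
    (G : ℝ → Matrix (Fin d) (Fin d) ℝ) (ε : ℤ → Ω → Fin d → ℝ) (T : ℕ) (t : ℤ)
    (ω : Ω) : Fin a → ℝ :=
  fun e => ∑' i : ℕ, ∑ q : Fin k × Fin d, C i e q * uproc G ε T (t - (i : ℕ)) ω q.2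

/-- `∑_{i≥0} C_i (1_{k×q} ⊗ S) D_i'` computed entrywise. -/
def limCov {d a b k q : ℕ} (C : ℕ → Matrix (Fin a) (Fin k × Fin d) ℝ)
    (D : ℕ → Matrix (Fin b) (Fin q × Fin d) ℝ) (S : Matrix (Fin d) (Fin d) ℝ) :
    Matrix (Fin a) (Fin b) ℝ :=
  Matrix.of fun e f => ∑' i : ℕ,
    ∑ x : Fin k × Fin d, ∑ y : Fin q × Fin d, C i e x * S x.2 y.2 * D i f y

end

/-! With `B₁ = (Z ⊗ Σ^{-1/2})ᵀ` and `B₂ = (Z ⊗ Σ^{1/2})ᵀ`, the mixed-product rule for Kronecker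
products turns `Λ₁`, `Λ₂`, `Λ₃` into the integrals of `B₁ᵀB₁`, `B₂ᵀB₂` and `B₂ᵀB₁`. So the block
matrix `[[Λ₂, Λ₃], [Λ₃, Λ₁]]` is the integral of the Gram matrix of `[B₂ B₁]`, hence positive
semidefinite, and both claimed inequalities are Schur complements of it (one conjugated by
`Λ₃⁻¹`). `Λ₃` is invertible since `Λ₃ = ∫ (Z ⊗ 1)(Z ⊗ 1)ᵀ` and `Z ⊗ Σ^{1/2} = (Z ⊗ 1)(1 ⊗ Σ^{1/2})`:
a vector in the kernel of `Λ₃` is in the kernel of `Λ₂`. -/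

section Bilinear

variable {R m n k : Type*} [Fintype m] [Fintype n]

lemma dotProduct_mulVec_eq_sum [NonUnitalNonAssocSemiring R] (M : Matrix m n R) (x : m → R)
    (y : n → R) : x ⬝ᵥ M *ᵥ y = ∑ i, ∑ j, x i * (M i j * y j) := by
  simp only [dotProduct, mulVec, Finset.mul_sum]

lemma dotProduct_mul_transpose_mulVec [CommSemiring R] [Fintype k] (A : Matrix m k R)
    (B : Matrix n k R) (x : m → R) (y : n → R) :
    x ⬝ᵥ (A * Bᵀ) *ᵥ y = (Aᵀ *ᵥ x) ⬝ᵥ (Bᵀ *ᵥ y) := by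
  rw [← mulVec_mulVec, dotProduct_mulVec, ← mulVec_transpose]

end Bilinear

section EntrywiseIntegral

variable {α : Type*} [MeasurableSpace α] {m n k : Type*}

-- Matrices carry no norm instance, so matrix integrals are taken entry by entry, as in `Lambda1`.
noncomputable def entrywiseIntegral (F : α → Matrix m n ℝ) (μ : Measure α) : Matrix m n ℝ :=
  Matrix.of fun i j => ∫ a, F a i j ∂μ

def EntrywiseIntegrable (F : α → Matrix m n ℝ) (μ : Measure α) : Prop :=
  ∀ i j, Integrable (fun a => F a i j) μ

variable {μ : Measure α}

lemma entrywiseIntegral_congr_ae {F G : α → Matrix m n ℝ} (h : F =ᵐ[μ] G) :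
    entrywiseIntegral F μ = entrywiseIntegral G μ := by
  ext i j
  exact integral_congr_ae (h.mono fun _ ha => congrFun (congrFun ha i) j)

lemma EntrywiseIntegrable.congr {F G : α → Matrix m n ℝ} (hF : EntrywiseIntegrable F μ)
    (h : F =ᵐ[μ] G) : EntrywiseIntegrable G μ :=
  fun i j => (hF i j).congr (h.mono fun _ ha => congrFun (congrFun ha i) j)

lemma entrywiseIntegrable_kronecker {m₁ n₁ m₂ n₂ : Type*} {A : α → Matrix m₁ n₁ ℝ}
    {B : α → Matrix m₂ n₂ ℝ}
    (h : ∀ (i : m₁ × m₂) (j : n₁ × n₂), Integrable (fun a => A a i.1 j.1 * B a i.2 j.2) μ) :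
    EntrywiseIntegrable (fun a => A a ⊗ₖ B a) μ :=
  h

lemma transpose_entrywiseIntegral (F : α → Matrix m n ℝ) :
    (entrywiseIntegral F μ)ᵀ = entrywiseIntegral (fun a => (F a)ᵀ) μ :=
  rfl

variable [Fintype m] [Fintype n] [Fintype k]

lemma EntrywiseIntegrable.dotProduct_mulVec {F : α → Matrix m n ℝ}
    (hF : EntrywiseIntegrable F μ) (x : m → ℝ) (y : n → ℝ) :
    Integrable (fun a => x ⬝ᵥ F a *ᵥ y) μ := by
  simp only [dotProduct_mulVec_eq_sum]
  exact integrable_finsetSum _ fun i _ => integrable_finsetSum _ fun j _ =>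
    ((hF i j).mul_const _).const_mul _

lemma dotProduct_entrywiseIntegral_mulVec {F : α → Matrix m n ℝ}
    (hF : EntrywiseIntegrable F μ) (x : m → ℝ) (y : n → ℝ) :
    x ⬝ᵥ entrywiseIntegral F μ *ᵥ y = ∫ a, x ⬝ᵥ F a *ᵥ y ∂μ := by
  simp only [dotProduct_mulVec_eq_sum]
  rw [integral_finsetSum _ fun i _ => integrable_finsetSum _ fun j _ =>
    ((hF i j).mul_const _).const_mul _]
  refine Finset.sum_congr rfl fun i _ => ?_
  rw [integral_finsetSum _ fun j _ => ((hF i j).mul_const _).const_mul _]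
  refine Finset.sum_congr rfl fun j _ => ?_
  rw [integral_const_mul, integral_mul_const]
  rfl

lemma posSemidef_entrywiseIntegral_mul_transpose {F : α → Matrix m k ℝ}
    (hF : EntrywiseIntegrable (fun a => F a * (F a)ᵀ) μ) :
    (entrywiseIntegral (fun a => F a * (F a)ᵀ) μ).PosSemidef := by
  refine .of_dotProduct_mulVec_nonneg ?_ fun x => ?_
  · rw [IsHermitian, conjTranspose_eq_transpose_of_trivial, transpose_entrywiseIntegral]
    simp only [transpose_mul, transpose_transpose]
  · rw [star_trivial, dotProduct_entrywiseIntegral_mulVec hF]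
    refine integral_nonneg fun a => ?_
    rw [dotProduct_mul_transpose_mulVec]
    simpa using dotProduct_star_self_nonneg ((F a)ᵀ *ᵥ x)

lemma ae_transpose_mulVec_eq_zero {F : α → Matrix m k ℝ}
    (hF : EntrywiseIntegrable (fun a => F a * (F a)ᵀ) μ) {x : m → ℝ}
    (hx : x ⬝ᵥ entrywiseIntegral (fun a => F a * (F a)ᵀ) μ *ᵥ x = 0) :
    ∀ᵐ a ∂μ, (F a)ᵀ *ᵥ x = 0 := by
  rw [dotProduct_entrywiseIntegral_mulVec hF] at hx
  have hnonneg : 0 ≤ fun a => x ⬝ᵥ (F a * (F a)ᵀ) *ᵥ x := fun a => by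
    simpa [dotProduct_mul_transpose_mulVec] using dotProduct_star_self_nonneg ((F a)ᵀ *ᵥ x)
  filter_upwards [(integral_eq_zero_iff_of_nonneg hnonneg (hF.dotProduct_mulVec x x)).1 hx]
    with a ha
  rwa [Pi.zero_apply, dotProduct_mul_transpose_mulVec, dotProduct_self_eq_zero] at ha

/-- The kernel of `∫ G Gᵀ` is annihilated by almost every `(G a)ᵀ`, hence by `(F a)ᵀ`. -/
lemma posDef_entrywiseIntegral_mul_transpose_of_factor {l : Type*} [Fintype l]
    {F : α → Matrix m k ℝ} {G : α → Matrix m l ℝ} {K : α → Matrix l k ℝ}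
    (hFG : ∀ᵐ a ∂μ, F a = G a * K a) (hF : EntrywiseIntegrable (fun a => F a * (F a)ᵀ) μ)
    (hG : EntrywiseIntegrable (fun a => G a * (G a)ᵀ) μ)
    (hFpos : (entrywiseIntegral (fun a => F a * (F a)ᵀ) μ).PosDef) :
    (entrywiseIntegral (fun a => G a * (G a)ᵀ) μ).PosDef := by
  have hGpsd := posSemidef_entrywiseIntegral_mul_transpose hG
  refine .of_dotProduct_mulVec_pos hGpsd.1 fun x hx => ?_
  refine (hGpsd.dotProduct_mulVec_nonneg x).lt_of_ne fun hzero => ?_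
  rw [star_trivial] at hzero
  have hFx : ∀ᵐ a ∂μ, (F a)ᵀ *ᵥ x = 0 := by
    filter_upwards [hFG, ae_transpose_mulVec_eq_zero hG hzero.symm] with a hFa hGx
    rw [hFa, transpose_mul, ← mulVec_mulVec, hGx, mulVec_zero]
  have hFzero : x ⬝ᵥ entrywiseIntegral (fun a => F a * (F a)ᵀ) μ *ᵥ x = 0 := by
    rw [dotProduct_entrywiseIntegral_mulVec hF]
    refine integral_eq_zero_of_ae (hFx.mono fun a ha => ?_)
    simp only [Pi.zero_apply, dotProduct_mul_transpose_mulVec, ha, zero_dotProduct]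
  simpa [hFzero] using hFpos.dotProduct_mulVec_pos hx

lemma posSemidef_fromBlocks_entrywiseIntegral {m' : Type*} [Fintype m']
    {F : α → Matrix m k ℝ} {F' : α → Matrix m' k ℝ}
    (hF : EntrywiseIntegrable (fun a => F a * (F a)ᵀ) μ)
    (hFF' : EntrywiseIntegrable (fun a => F a * (F' a)ᵀ) μ)
    (hF' : EntrywiseIntegrable (fun a => F' a * (F' a)ᵀ) μ) :
    (fromBlocks (entrywiseIntegral (fun a => F a * (F a)ᵀ) μ)
      (entrywiseIntegral (fun a => F a * (F' a)ᵀ) μ)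
      (entrywiseIntegral (fun a => F a * (F' a)ᵀ) μ)ᴴ
      (entrywiseIntegral (fun a => F' a * (F' a)ᵀ) μ)).PosSemidef := by
  have hgram : ∀ a, fromRows (F a) (F' a) * (fromRows (F a) (F' a))ᵀ =
      fromBlocks (F a * (F a)ᵀ) (F a * (F' a)ᵀ) (F a * (F' a)ᵀ)ᵀ (F' a * (F' a)ᵀ) := by
    intro a
    rw [transpose_fromRows, fromRows_mul_fromCols, transpose_mul, transpose_transpose]
  have hint : EntrywiseIntegrable
      (fun a => fromRows (F a) (F' a) * (fromRows (F a) (F' a))ᵀ) μ := by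
    simp only [hgram]
    rintro (i | i) (j | j)
    exacts [hF i j, hFF' i j, hFF' j i, hF' i j]
  convert posSemidef_entrywiseIntegral_mul_transpose hint using 1
  simp only [hgram, conjTranspose_eq_transpose_of_trivial]
  ext (i | i) (j | j) <;> rfl

end EntrywiseIntegral

lemma Matrix.PosSemidef.schur_complements_of_fromBlocks {n K : Type*} [Fintype n]
    [DecidableEq n] [Field K] [PartialOrder K] [StarRing K] [StarOrderedRing K]
    {A B D : Matrix n n K} (hA : A.PosDef) (hD : D.PosDef) (hB : B.IsHermitian) (hBu : IsUnit B)
    (h : (fromBlocks A B B D).PosSemidef) :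
    (B⁻¹ * A * B⁻¹ - D⁻¹).PosSemidef ∧ (D - B * A⁻¹ * B).PosSemidef := by
  have := hA.isUnit.invertible
  have := hD.isUnit.invertible
  have h' : (fromBlocks A B Bᴴ D).PosSemidef := by rwa [hB.eq]
  have hschurA := (PosDef.fromBlocks₂₂ _ _ hD).1 h'
  have hschurD := (PosDef.fromBlocks₁₁ _ _ hA).1 h'
  rw [hB.eq] at hschurA hschurD
  have hBdet := (isUnit_iff_isUnit_det B).1 hBu
  have hcancel : B⁻¹ * (B * D⁻¹ * B) * B⁻¹ = D⁻¹ := by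
    rw [show B⁻¹ * (B * D⁻¹ * B) * B⁻¹ = B⁻¹ * B * D⁻¹ * (B * B⁻¹) by simp only [mul_assoc],
      nonsing_inv_mul _ hBdet, mul_nonsing_inv _ hBdet, one_mul, mul_one]
  have hconj := hschurA.mul_mul_conjTranspose_same B⁻¹
  rw [hB.inv.eq, mul_sub, sub_mul, hcancel] at hconj
  exact ⟨hconj, hschurD⟩

lemma Matrix.kronecker_mul_kronecker_transpose {R k l m n : Type*} [CommSemiring R] [Fintype l]
    [Fintype n] (Z Z' : Matrix k l R) (A B : Matrix m n R) :
    (Z ⊗ₖ A) * (Z' ⊗ₖ B)ᵀ = (Z * Z'ᵀ) ⊗ₖ (A * Bᵀ) := by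
  rw [← kroneckerMap_transpose, ← mul_kronecker_mul]

section SymmetricSquareRoot

variable {n R : Type*} [Fintype n] [DecidableEq n] [CommRing R] {W S : Matrix n n R}

lemma inv_mul_inv_transpose_of_mul_self_eq (hW : Wᵀ = W) (hWS : W * W = S) :
    W⁻¹ * W⁻¹ᵀ = S⁻¹ := by
  rw [transpose_nonsing_inv, hW, ← Matrix.mul_inv_rev, hWS]

lemma mul_inv_transpose_of_mul_self_eq (hW : Wᵀ = W) (hWS : W * W = S) (hS : IsUnit S) :
    W * W⁻¹ᵀ = 1 := by
  have hWunit : IsUnit W := isUnit_of_mul_isUnit_left (hWS ▸ hS)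
  rw [transpose_nonsing_inv, hW, mul_nonsing_inv _ ((isUnit_iff_isUnit_det _).1 hWunit)]

end SymmetricSquareRoot

section Lambda

variable {d p : ℕ} {ψ : ℕ → Matrix (Fin d) (Fin d) ℝ} {G : ℝ → Matrix (Fin d) (Fin d) ℝ}
  {Z : ℝ → Matrix (Fin p × Fin d) (Fin p × Fin d) ℝ}

lemma lambda3_eq_entrywiseIntegral :
    Lambda3 p ψ G = entrywiseIntegral
      (fun r => SSmat p ψ (Sig G r) ⊗ₖ (1 : Matrix (Fin d) (Fin d) ℝ))
      (volume.restrict (Set.Ioc 0 1)) := by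
  ext q q'
  simp only [Lambda3, entrywiseIntegral, of_apply, kroneckerMap_apply, one_apply]
  exact (integral_mul_const _ _).symm

lemma kronecker_mul_kronecker_transpose_ae_eq {A B C : ℝ → Matrix (Fin d) (Fin d) ℝ}
    (hZ : ∀ r ∈ Set.Ioc (0 : ℝ) 1, SSmat p ψ (Sig G r) = Z r * (Z r)ᵀ)
    (hABC : ∀ r ∈ Set.Ioc (0 : ℝ) 1, A r * (B r)ᵀ = C r) :
    (fun r => (Z r ⊗ₖ A r) * (Z r ⊗ₖ B r)ᵀ) =ᵐ[volume.restrict (Set.Ioc 0 1)]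
      fun r => SSmat p ψ (Sig G r) ⊗ₖ C r :=
  ae_restrict_of_forall_mem measurableSet_Ioc fun r hr => by
    simp only [kronecker_mul_kronecker_transpose, hZ r hr, hABC r hr]

end Lambda

theorem gls_variance_smaller_than_ols_general
    {d p : ℕ}
    (G : ℝ → Matrix (Fin d) (Fin d) ℝ) (ψ : ℕ → Matrix (Fin d) (Fin d) ℝ)
    (hSig : ∀ r ∈ Set.Ioc (0 : ℝ) 1, (Sig G r).PosDef)
    -- the integrals defining `Λ₁`, `Λ₂`, `Λ₃` are well defined
    (hint1 : ∀ q q' : (Fin p × Fin d) × Fin d, MeasureTheory.IntegrableOn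
      (fun r => SSmat p ψ (Sig G r) q.1 q'.1 * (Sig G r)⁻¹ q.2 q'.2) (Set.Ioc 0 1))
    (hint2 : ∀ q q' : (Fin p × Fin d) × Fin d, MeasureTheory.IntegrableOn
      (fun r => SSmat p ψ (Sig G r) q.1 q'.1 * Sig G r q.2 q'.2) (Set.Ioc 0 1))
    (hint3 : ∀ q1 q1' : Fin p × Fin d, MeasureTheory.IntegrableOn
      (fun r => SSmat p ψ (Sig G r) q1 q1') (Set.Ioc 0 1))
    (hpd1 : (Lambda1 p ψ G).PosDef) (hpd2 : (Lambda2 p ψ G).PosDef)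
    -- a pointwise Cholesky-type factorization `∑ ψ̃ᵢ(1⊗Σ(r))ψ̃ᵢ' = Z(r)Z(r)'`
    (Z : ℝ → Matrix (Fin p × Fin d) (Fin p × Fin d) ℝ)
    (hZ : ∀ r ∈ Set.Ioc (0 : ℝ) 1, SSmat p ψ (Sig G r) = Z r * (Z r)ᵀ)
    -- `W r = Σ(r)^{1/2}`, so that `Σ(r)^{-1/2} = (W r)⁻¹`
    (W : ℝ → Matrix (Fin d) (Fin d) ℝ)
    (hW : ∀ r ∈ Set.Ioc (0 : ℝ) 1, (W r).PosSemidef ∧ W r * W r = Sig G r) :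
    -- `Λ₁ = ∫ B₁(r)'B₁(r) dr` with `B₁(r) = (Z(r) ⊗ Σ(r)^{-1/2})'`
    (∀ q q', Lambda1 p ψ G q q' = ∫ r in Set.Ioc (0 : ℝ) 1,
      ((Z r ⊗ₖ (W r)⁻¹) * (Z r ⊗ₖ (W r)⁻¹)ᵀ) q q') ∧
    -- `Λ₂ = ∫ B₂(r)'B₂(r) dr` with `B₂(r) = (Z(r) ⊗ Σ(r)^{1/2})'`
    (∀ q q', Lambda2 p ψ G q q' = ∫ r in Set.Ioc (0 : ℝ) 1,
      ((Z r ⊗ₖ W r) * (Z r ⊗ₖ W r)ᵀ) q q') ∧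
    -- `Λ₃ = ∫ B₂(r)'B₁(r) dr`
    (∀ q q', Lambda3 p ψ G q q' = ∫ r in Set.Ioc (0 : ℝ) 1,
      ((Z r ⊗ₖ W r) * (Z r ⊗ₖ (W r)⁻¹)ᵀ) q q') ∧
    ((Lambda3 p ψ G)⁻¹ * Lambda2 p ψ G * (Lambda3 p ψ G)⁻¹ -
      (Lambda1 p ψ G)⁻¹).PosSemidef ∧
    (Lambda1 p ψ G - Lambda3 p ψ G * (Lambda2 p ψ G)⁻¹ * Lambda3 p ψ G).PosSemidef := by
  have hWt : ∀ r ∈ Set.Ioc (0 : ℝ) 1, (W r)ᵀ = W r := fun r hr => (hW r hr).1.1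
  have e₁ := kronecker_mul_kronecker_transpose_ae_eq hZ fun r hr =>
    inv_mul_inv_transpose_of_mul_self_eq (hWt r hr) (hW r hr).2
  have e₂ := kronecker_mul_kronecker_transpose_ae_eq (A := W) (B := W) hZ fun r hr => by
    rw [hWt r hr, (hW r hr).2]
  have e₃ := kronecker_mul_kronecker_transpose_ae_eq hZ fun r hr =>
    mul_inv_transpose_of_mul_self_eq (hWt r hr) (hW r hr).2 (hSig r hr).isUnit
  have e₀ := kronecker_mul_kronecker_transpose_ae_eq (A := fun _ => 1) (B := fun _ => 1)
    (C := fun _ => 1) hZ fun _ _ => by simp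
  have hint3' := entrywiseIntegrable_kronecker (B := fun _ => (1 : Matrix (Fin d) (Fin d) ℝ))
    fun q q' => (hint3 q.1 q'.1).mul_const _
  have i₁ := (entrywiseIntegrable_kronecker hint1).congr e₁.symm
  have i₂ := (entrywiseIntegrable_kronecker hint2).congr e₂.symm
  have i₃ := hint3'.congr e₃.symm
  have i₀ := hint3'.congr e₀.symm
  have hΛ₁ : Lambda1 p ψ G = _ := entrywiseIntegral_congr_ae e₁.symm
  have hΛ₂ : Lambda2 p ψ G = _ := entrywiseIntegral_congr_ae e₂.symm
  have hΛ₃ := lambda3_eq_entrywiseIntegral.trans (entrywiseIntegral_congr_ae e₃.symm)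
  have hpd₃ : (Lambda3 p ψ G).PosDef := by
    rw [lambda3_eq_entrywiseIntegral, entrywiseIntegral_congr_ae e₀.symm]
    refine posDef_entrywiseIntegral_mul_transpose_of_factor (K := fun r => 1 ⊗ₖ W r)
      (ae_of_all _ fun r => ?_) i₂ i₀ (hΛ₂ ▸ hpd2)
    rw [← mul_kronecker_mul, mul_one, one_mul]
  have hblock := posSemidef_fromBlocks_entrywiseIntegral i₂ i₃ i₁
  rw [← hΛ₁, ← hΛ₂, ← hΛ₃, hpd₃.1.eq] at hblock
  obtain ⟨hinv, hschur⟩ := hblock.schur_complements_of_fromBlocks hpd2 hpd1 hpd₃.1 hpd₃.isUnit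
  exact ⟨Matrix.ext_iff.2 hΛ₁, Matrix.ext_iff.2 hΛ₂, Matrix.ext_iff.2 hΛ₃, hinv, hschur⟩

/-- With `Λ₁, Λ₂, Λ₃` the asymptotic covariance ingredients of the GLS and
OLS estimators, writing `∑ ψ̃ᵢ(1⊗Σ(r))ψ̃ᵢ' = Z(r)Z(r)'` and `B_k(r) = (Z(r) ⊗ Σ(r)^{k-3/2})'`,
one has `Λ_k = ∫ B_k'B_k`, `Λ₃ = ∫ B₂'B₁`, and `Λ₃⁻¹Λ₂Λ₃⁻¹ − Λ₁⁻¹` and `Λ₁ − Λ₃Λ₂⁻¹Λ₃` are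
positive semidefinite: the GLS estimator has a smaller asymptotic variance than OLS. -/
theorem gls_variance_smaller_than_ols
    {d p : ℕ} (hd : 0 < d) (hp : 0 < p)
    (G : ℝ → Matrix (Fin d) (Fin d) ℝ) (ψ : ℕ → Matrix (Fin d) (Fin d) ℝ)
    (hψ0 : ψ 0 = 1)
    (hψsum : ∀ k l, Summable fun i => |ψ i k l|)
    (hGmeas : ∀ k l, Measurable fun r => G r k l)
    (hGbdd : ∃ M : ℝ, ∀ r ∈ Set.Ioc (0 : ℝ) 1, ∀ k l, |G r k l| ≤ M)
    (hSig : ∀ r ∈ Set.Ioc (0 : ℝ) 1, (Sig G r).PosDef)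
    -- the integrals defining `Λ₁`, `Λ₂`, `Λ₃` are well defined
    (hint1 : ∀ q q' : (Fin p × Fin d) × Fin d, MeasureTheory.IntegrableOn
      (fun r => SSmat p ψ (Sig G r) q.1 q'.1 * (Sig G r)⁻¹ q.2 q'.2) (Set.Ioc 0 1))
    (hint2 : ∀ q q' : (Fin p × Fin d) × Fin d, MeasureTheory.IntegrableOn
      (fun r => SSmat p ψ (Sig G r) q.1 q'.1 * Sig G r q.2 q'.2) (Set.Ioc 0 1))
    (hint3 : ∀ q1 q1' : Fin p × Fin d, MeasureTheory.IntegrableOn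
      (fun r => SSmat p ψ (Sig G r) q1 q1') (Set.Ioc 0 1))
    (hpd1 : (Lambda1 p ψ G).PosDef) (hpd2 : (Lambda2 p ψ G).PosDef)
    -- a pointwise Cholesky-type factorization `∑ ψ̃ᵢ(1⊗Σ(r))ψ̃ᵢ' = Z(r)Z(r)'`
    (Z : ℝ → Matrix (Fin p × Fin d) (Fin p × Fin d) ℝ)
    (hZ : ∀ r ∈ Set.Ioc (0 : ℝ) 1, SSmat p ψ (Sig G r) = Z r * (Z r)ᵀ)
    -- `W r = Σ(r)^{1/2}`, so that `Σ(r)^{-1/2} = (W r)⁻¹`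
    (W : ℝ → Matrix (Fin d) (Fin d) ℝ)
    (hW : ∀ r ∈ Set.Ioc (0 : ℝ) 1, (W r).PosSemidef ∧ W r * W r = Sig G r) :
    -- `Λ₁ = ∫ B₁(r)'B₁(r) dr` with `B₁(r) = (Z(r) ⊗ Σ(r)^{-1/2})'`
    (∀ q q', Lambda1 p ψ G q q' = ∫ r in Set.Ioc (0 : ℝ) 1,
      ((Z r ⊗ₖ (W r)⁻¹) * (Z r ⊗ₖ (W r)⁻¹)ᵀ) q q') ∧
    -- `Λ₂ = ∫ B₂(r)'B₂(r) dr` with `B₂(r) = (Z(r) ⊗ Σ(r)^{1/2})'`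
    (∀ q q', Lambda2 p ψ G q q' = ∫ r in Set.Ioc (0 : ℝ) 1,
      ((Z r ⊗ₖ W r) * (Z r ⊗ₖ W r)ᵀ) q q') ∧
    -- `Λ₃ = ∫ B₂(r)'B₁(r) dr`
    (∀ q q', Lambda3 p ψ G q q' = ∫ r in Set.Ioc (0 : ℝ) 1,
      ((Z r ⊗ₖ W r) * (Z r ⊗ₖ (W r)⁻¹)ᵀ) q q') ∧
    ((Lambda3 p ψ G)⁻¹ * Lambda2 p ψ G * (Lambda3 p ψ G)⁻¹ -
      (Lambda1 p ψ G)⁻¹).PosSemidef ∧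
    (Lambda1 p ψ G - Lambda3 p ψ G * (Lambda2 p ψ G)⁻¹ * Lambda3 p ψ G).PosSemidef :=
  gls_variance_smaller_than_ols_general G ψ hSig hint1 hint2 hint3 hpd1 hpd2 Z hZ W hW
end

section
/- Suppose Σ(r) is a positive definite d×d matrix for each r ∈ (0,1] with bounded measurable entries, and ψ̃_i = blockdiag(ψ_i, ψ_{i−1}, …, ψ_{i−p+1}) where the d×d matrices ψ_i have absolutely summable components, ψ_0 = I_d and ψ_j = 0 for j < 0. Then for every r the pd×pd matrix Σ_{i=0}^∞ ψ̃_i (1_{p×p} ⊗ Σ(r)) ψ̃_i' is positive definite, and consequently the matrices Λ1 = ∫₀¹ Σ_{i=0}^∞ {ψ̃_i (1_{p×p} ⊗ Σ(r)) ψ̃_i'} ⊗ Σ(r)^{−1} dr, Λ2 = ∫₀¹ Σ_{i=0}^∞ {ψ̃_i (1_{p×p} ⊗ Σ(r)) ψ̃_i'} ⊗ Σ(r) dr and Λ3 = ∫₀¹ Σ_{i=0}^∞ {ψ̃_i (1_{p×p} ⊗ Σ(r)) ψ̃_i'} dr ⊗ I_d are positive definite. -/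
open MeasureTheory ProbabilityTheory Filter Matrix Kronecker Topology

/-!
Write `Bᵢ = ψ̃ᵢ (1_p ⊗ I_d)` for the stack of `ψᵢ, …, ψᵢ₋ₚ₊₁`. The `i`-th summand of the series
is `Bᵢ Σ Bᵢ'`, so the series is a convergent sum of positive semidefinite matrices. Given
`x ≠ 0`, let `a` be the first block with `x_a ≠ 0`; because `ψ₀ = I_d` and `ψⱼ = 0` for `j < 0`,
`B_a' x = x_a`, so already the `a`-th summand gives `x' B_a Σ B_a' x > 0`. Positive definiteness
then passes to Kronecker products and to integrals over `(0,1]` of pointwise positive definite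
families.
-/

theorem Matrix.posDef_of_hasSum {ι n : Type*} [Fintype n] {M : ι → Matrix n n ℝ}
    {A : Matrix n n ℝ} (hA : HasSum M A) (hM : ∀ i, (M i).PosSemidef)
    (hpos : ∀ x : n → ℝ, x ≠ 0 → ∃ i, 0 < x ⬝ᵥ M i *ᵥ x) : A.PosDef := by
  have hherm : A.IsHermitian := by
    have h := hA.matrix_conjTranspose
    simp only [fun i => (hM i).1.eq] at h
    exact h.unique hA
  refine PosDef.of_dotProduct_mulVec_pos hherm fun x hx => ?_
  let q : Matrix n n ℝ →+ ℝ :=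
    { toFun := fun B => x ⬝ᵥ B *ᵥ x
      map_zero' := by simp
      map_add' := fun B C => by simp [add_mulVec, dotProduct_add] }
  have hq : HasSum (fun i => x ⬝ᵥ M i *ᵥ x) (x ⬝ᵥ A *ᵥ x) :=
    hA.map q (show Continuous fun B : Matrix n n ℝ => x ⬝ᵥ B *ᵥ x by fun_prop)
  obtain ⟨i, hi⟩ := hpos x hx
  rw [star_trivial, ← hq.tsum_eq]
  exact hq.summable.tsum_pos (fun j => by simpa using (hM j).dotProduct_mulVec_nonneg x) i hi

theorem Matrix.dotProduct_integral_mulVec {α n : Type*} [Fintype n] [MeasurableSpace α]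
    {μ : Measure α} {F : α → Matrix n n ℝ} (hF : ∀ i j, Integrable (fun a => F a i j) μ)
    (x : n → ℝ) :
    x ⬝ᵥ (of fun i j => ∫ a, F a i j ∂μ) *ᵥ x = ∫ a, x ⬝ᵥ F a *ᵥ x ∂μ := by
  have hterm : ∀ i j, Integrable (fun a => x i * (F a i j * x j)) μ :=
    fun i j => ((hF i j).mul_const _).const_mul _
  simp only [dotProduct, mulVec, of_apply, Finset.mul_sum]
  rw [integral_finsetSum _ fun i _ => integrable_finsetSum _ fun j _ => hterm i j]
  refine Finset.sum_congr rfl fun i _ => ?_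
  rw [integral_finsetSum _ fun j _ => hterm i j]
  refine Finset.sum_congr rfl fun j _ => ?_
  rw [integral_const_mul, integral_mul_const]

theorem Matrix.posDef_integral {α n : Type*} [Fintype n] [MeasurableSpace α]
    {μ : Measure α} [NeZero μ] {F : α → Matrix n n ℝ} (hF : ∀ᵐ a ∂μ, (F a).PosDef)
    (hint : ∀ i j, Integrable (fun a => F a i j) μ) :
    (of fun i j => ∫ a, F a i j ∂μ).PosDef := by
  have hherm : (of fun i j => ∫ a, F a i j ∂μ).IsHermitian := by
    ext i j
    refine integral_congr_ae (hF.mono fun a ha => ?_)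
    simpa using congrFun (congrFun ha.1 i) j
  refine PosDef.of_dotProduct_mulVec_pos hherm fun x hx => ?_
  have hpos : ∀ᵐ a ∂μ, 0 < x ⬝ᵥ F a *ᵥ x :=
    hF.mono fun a ha => by simpa using ha.dotProduct_mulVec_pos hx
  have hint' : Integrable (fun a => x ⬝ᵥ F a *ᵥ x) μ := by
    simp only [dotProduct, mulVec]
    exact integrable_finsetSum _ fun i _ => (integrable_finsetSum _ fun j _ =>
      ((hint i j).mul_const _)).const_mul _
  rw [star_trivial, dotProduct_integral_mulVec hint,
    integral_pos_iff_support_of_nonneg_ae (hpos.mono fun a ha => ha.le) hint', pos_iff_ne_zero]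
  intro hnull
  have hzero : ∀ᵐ a ∂μ, x ⬝ᵥ F a *ᵥ x = 0 := measure_eq_zero_iff_ae_notMem.1 hnull |>.mono
    fun a ha => Function.notMem_support.1 ha
  obtain ⟨a, ha, ha'⟩ := (hpos.and hzero).exists
  exact ha.ne' ha'

theorem Matrix.dotProduct_mul_mul_transpose_mulVec {m n R : Type*} [Fintype m] [Fintype n]
    [CommSemiring R] (B : Matrix m n R) (S : Matrix n n R) (x : m → R) :
    x ⬝ᵥ (B * S * Bᵀ) *ᵥ x = (Bᵀ *ᵥ x) ⬝ᵥ S *ᵥ (Bᵀ *ᵥ x) := by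
  rw [← mulVec_mulVec, ← mulVec_mulVec, dotProduct_mulVec, mulVec_transpose, ← dotProduct_mulVec]

/-- The matrix `Bᵢ = ψ̃ᵢ (1_p ⊗ I_d)`: since `1_{p×p} ⊗ S = (1_p ⊗ I_d) S (1_p ⊗ I_d)'`, the
`i`-th summand of `SSmat p ψ S` is `Bᵢ S Bᵢ'`. -/
def psiStack {d : ℕ} (p : ℕ) (ψ : ℕ → Matrix (Fin d) (Fin d) ℝ) (i : ℕ) :
    Matrix (Fin p × Fin d) (Fin d) ℝ :=
  of fun q m => if (q.1 : ℕ) ≤ i then ψ (i - (q.1 : ℕ)) q.2 m else 0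

section psiStack

variable {d p : ℕ} {ψ : ℕ → Matrix (Fin d) (Fin d) ℝ}

theorem psiT_mul_ones_kronecker_mul_transpose (S : Matrix (Fin d) (Fin d) ℝ) (i : ℕ) :
    psiT p ψ i * ((of fun _ _ => (1 : ℝ) : Matrix (Fin p) (Fin p) ℝ) ⊗ₖ S) * (psiT p ψ i)ᵀ =
      psiStack p ψ i * S * (psiStack p ψ i)ᵀ := by
  ext q q'
  simp only [mul_apply, transpose_apply, psiT, psiStack, of_apply, kroneckerMap_apply,
    Fintype.sum_prod_type, ite_and, ite_mul, mul_ite, zero_mul, mul_zero, one_mul,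
    Finset.sum_ite_irrel, Finset.sum_const_zero, Finset.sum_ite_eq, Finset.mem_univ, if_true]

theorem summable_abs_psiStack_apply (hψ : ∀ k l, Summable fun i => |ψ i k l|)
    (q : Fin p × Fin d) (m : Fin d) :
    Summable fun i => |psiStack p ψ i q m| := by
  refine (summable_nat_add_iff (q.1 : ℕ)).1 ?_
  simpa [psiStack] using hψ q.2 m

theorem hasSum_psiStack_mul_mul_transpose (hψ : ∀ k l, Summable fun i => |ψ i k l|)
    (S : Matrix (Fin d) (Fin d) ℝ) :
    HasSum (fun i => psiStack p ψ i * S * (psiStack p ψ i)ᵀ) (SSmat p ψ S) := by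
  have hsum : ∀ q q', Summable fun i => (psiStack p ψ i * S * (psiStack p ψ i)ᵀ) q q' := by
    intro q q'
    simp only [mul_apply, transpose_apply, Finset.sum_mul]
    refine summable_sum fun l _ => summable_sum fun k _ => ?_
    have hk : Summable fun i => ‖psiStack p ψ i q k‖ := by
      simpa only [Real.norm_eq_abs] using summable_abs_psiStack_apply hψ q k
    have hl : Tendsto (fun i => psiStack p ψ i q' l) cofinite (𝓝 0) :=
      (summable_abs_psiStack_apply hψ q' l).of_abs.tendsto_cofinite_zero
    exact ((hk.mul_tendsto_const hl).mul_right (S k l)).congr fun i => mul_right_comm _ _ _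
  refine Pi.hasSum.2 fun q => Pi.hasSum.2 fun q' => ?_
  simpa only [SSmat, of_apply, psiT_mul_ones_kronecker_mul_transpose] using (hsum q q').hasSum

theorem psiStack_transpose_mulVec_of_forall_lt (hψ0 : ψ 0 = 1) {x : Fin p × Fin d → ℝ}
    {a : Fin p} (hx : ∀ b < a, ∀ m, x (b, m) = 0) :
    (psiStack p ψ a)ᵀ *ᵥ x = fun m => x (a, m) := by
  funext m
  simp only [mulVec, dotProduct, transpose_apply, psiStack, of_apply, Fintype.sum_prod_type]
  rw [Finset.sum_eq_single a]
  · simp [hψ0, one_apply]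
  · intro b _ hba
    rcases hba.lt_or_gt with hb | hb
    · simp [hx b hb]
    · simp [Fin.lt_def.1 hb |>.not_ge]
  · simp

theorem SSmat_posDef (hψ0 : ψ 0 = 1) (hψ : ∀ k l, Summable fun i => |ψ i k l|)
    {S : Matrix (Fin d) (Fin d) ℝ} (hS : S.PosDef) :
    (SSmat p ψ S).PosDef := by
  refine posDef_of_hasSum (hasSum_psiStack_mul_mul_transpose hψ S)
    (fun i => by simpa using hS.posSemidef.mul_mul_conjTranspose_same (psiStack p ψ i))
    fun x hx => ?_
  obtain ⟨a, ⟨m, hm⟩, hmin⟩ := wellFounded_lt.has_min {a : Fin p | ∃ m, x (a, m) ≠ 0} <| by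
    obtain ⟨⟨a, m⟩, h⟩ := Function.ne_iff.1 hx
    exact ⟨a, m, h⟩
  have hBx : (psiStack p ψ a)ᵀ *ᵥ x = fun m => x (a, m) :=
    psiStack_transpose_mulVec_of_forall_lt hψ0 fun b hb m => by
      by_contra h
      exact hmin b ⟨m, h⟩ hb
  refine ⟨a, ?_⟩
  rw [dotProduct_mul_mul_transpose_mulVec, hBx]
  simpa using hS.dotProduct_mulVec_pos (x := fun m => x (a, m)) (Function.ne_iff.2 ⟨m, hm⟩)

end psiStack

theorem lambda_matrices_posdef_general
    {d p : ℕ}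
    (G : ℝ → Matrix (Fin d) (Fin d) ℝ) (ψ : ℕ → Matrix (Fin d) (Fin d) ℝ)
    (hψ0 : ψ 0 = 1)
    (hψsum : ∀ k l, Summable fun i => |ψ i k l|)
    (hSig : ∀ r ∈ Set.Ioc (0 : ℝ) 1, (Sig G r).PosDef)
    -- the integrals defining `Λ₁`, `Λ₂`, `Λ₃` are well defined
    (hint1 : ∀ q q' : (Fin p × Fin d) × Fin d, MeasureTheory.IntegrableOn
      (fun r => SSmat p ψ (Sig G r) q.1 q'.1 * (Sig G r)⁻¹ q.2 q'.2) (Set.Ioc 0 1))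
    (hint2 : ∀ q q' : (Fin p × Fin d) × Fin d, MeasureTheory.IntegrableOn
      (fun r => SSmat p ψ (Sig G r) q.1 q'.1 * Sig G r q.2 q'.2) (Set.Ioc 0 1))
    (hint3 : ∀ q1 q1' : Fin p × Fin d, MeasureTheory.IntegrableOn
      (fun r => SSmat p ψ (Sig G r) q1 q1') (Set.Ioc 0 1)) :
    (∀ r ∈ Set.Ioc (0 : ℝ) 1, (SSmat p ψ (Sig G r)).PosDef) ∧
    (Lambda1 p ψ G).PosDef ∧ (Lambda2 p ψ G).PosDef ∧ (Lambda3 p ψ G).PosDef := by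
  have hSS : ∀ r ∈ Set.Ioc (0 : ℝ) 1, (SSmat p ψ (Sig G r)).PosDef :=
    fun r hr => SSmat_posDef hψ0 hψsum (hSig r hr)
  have : NeZero (volume.restrict (Set.Ioc (0 : ℝ) 1)) := ⟨by simp⟩
  have hae : ∀ᵐ r ∂volume.restrict (Set.Ioc (0 : ℝ) 1), r ∈ Set.Ioc (0 : ℝ) 1 :=
    ae_restrict_mem measurableSet_Ioc
  have hΛ3 : Lambda3 p ψ G =
      (of fun q q' => ∫ r in Set.Ioc (0 : ℝ) 1, SSmat p ψ (Sig G r) q q') ⊗ₖ 1 := by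
    ext q q'
    simp [Lambda3, one_apply]
  refine ⟨hSS, ?_, ?_, ?_⟩
  · exact posDef_integral (hae.mono fun r hr => (hSS r hr).kronecker (hSig r hr).inv) hint1
  · exact posDef_integral (hae.mono fun r hr => (hSS r hr).kronecker (hSig r hr)) hint2
  · rw [hΛ3]
    exact (posDef_integral (hae.mono hSS) hint3).kronecker PosDef.one

/-- If `Σ(r)` is positive definite on `(0,1]` with bounded measurable entries
and the `ψᵢ` are absolutely summable with `ψ₀ = I_d`, then `∑ ψ̃ᵢ(1_{p×p}⊗Σ(r))ψ̃ᵢ'` is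
positive definite for every `r`, and consequently `Λ₁`, `Λ₂` and `Λ₃` are positive definite. -/
theorem lambda_matrices_posdef
    {d p : ℕ} (hd : 0 < d) (hp : 0 < p)
    (G : ℝ → Matrix (Fin d) (Fin d) ℝ) (ψ : ℕ → Matrix (Fin d) (Fin d) ℝ)
    (hψ0 : ψ 0 = 1)
    (hψsum : ∀ k l, Summable fun i => |ψ i k l|)
    (hGmeas : ∀ k l, Measurable fun r => G r k l)
    (hGbdd : ∃ M : ℝ, ∀ r ∈ Set.Ioc (0 : ℝ) 1, ∀ k l, |G r k l| ≤ M)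
    (hSig : ∀ r ∈ Set.Ioc (0 : ℝ) 1, (Sig G r).PosDef)
    -- the integrals defining `Λ₁`, `Λ₂`, `Λ₃` are well defined
    (hint1 : ∀ q q' : (Fin p × Fin d) × Fin d, MeasureTheory.IntegrableOn
      (fun r => SSmat p ψ (Sig G r) q.1 q'.1 * (Sig G r)⁻¹ q.2 q'.2) (Set.Ioc 0 1))
    (hint2 : ∀ q q' : (Fin p × Fin d) × Fin d, MeasureTheory.IntegrableOn
      (fun r => SSmat p ψ (Sig G r) q.1 q'.1 * Sig G r q.2 q'.2) (Set.Ioc 0 1))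
    (hint3 : ∀ q1 q1' : Fin p × Fin d, MeasureTheory.IntegrableOn
      (fun r => SSmat p ψ (Sig G r) q1 q1') (Set.Ioc 0 1)) :
    (∀ r ∈ Set.Ioc (0 : ℝ) 1, (SSmat p ψ (Sig G r)).PosDef) ∧
    (Lambda1 p ψ G).PosDef ∧ (Lambda2 p ψ G).PosDef ∧ (Lambda3 p ψ G).PosDef :=
  lambda_matrices_posdef_general G ψ hψ0 hψsum hSig hint1 hint2 hint3
end
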